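/- Let G be a finite group with |C(G)| = |G| - 1. Then G has no cyclic subgroup of order 6. -/
import Mathlib

open Subgroup

private lemma zpowers_isCyclic' {G : Type*} [Group G] (a : G) :
    IsCyclic (Subgroup.zpowers a) := by
  refine ⟨⟨⟨a, Subgroup.mem_zpowers a⟩, ?_⟩⟩
  rintro ⟨y, hy⟩
  obtain ⟨k, hk⟩ := hy
  exact ⟨k, Subtype.ext (by simpa using hk)⟩

private lemma exists_zpowers_eq' {G : Type*} [Group G] (K : Subgroup G)
    (hK : IsCyclic K) : ∃ a : G, Subgroup.zpowers a = K := by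
  obtain ⟨x, hx⟩ := hK.exists_generator
  refine ⟨(x : G), le_antisymm (Subgroup.zpowers_le.mpr x.2) ?_⟩
  intro y hy
  obtain ⟨k, hk⟩ := hx ⟨y, hy⟩
  exact ⟨k, by simpa using congrArg Subtype.val hk⟩

theorem stmt_5 (G : Type*) [Group G] [Fintype G]
    (h : Nat.card {H : Subgroup G // IsCyclic H} = Nat.card G - 1) :
    ∀ H : Subgroup G, IsCyclic H → Nat.card H ≠ 6 := by
  classical
  intro H hc hcard
  obtain ⟨g, hg⟩ := exists_zpowers_eq' H hc
  have hord : orderOf g = 6 := by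
    rw [← Nat.card_zpowers, hg]; exact hcard
  have hord2 : orderOf (g ^ 2) = 3 := by
    rw [orderOf_pow, hord]; norm_num
  -- the two distinguished cyclic subgroups
  set B := {H : Subgroup G // IsCyclic H} with hB
  let f : G → B := fun a => ⟨Subgroup.zpowers a, zpowers_isCyclic' a⟩
  have hfsurj : Function.Surjective f := by
    rintro ⟨K, hK⟩
    obtain ⟨a, ha⟩ := exists_zpowers_eq' K hK
    exact ⟨a, Subtype.ext ha⟩
  let b1 : B := f g
  let b2 : B := f (g ^ 2)
  have hb12 : b1 ≠ b2 := by
    intro he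
    have : Nat.card (Subgroup.zpowers g) = Nat.card (Subgroup.zpowers (g ^ 2)) := by
      have := congrArg (fun b : B => Nat.card b.1) he
      simpa [b1, b2, f] using this
    rw [Nat.card_zpowers, Nat.card_zpowers, hord, hord2] at this
    omega
  -- counting
  have hginv : g⁻¹ ≠ g := by
    intro he
    have : g ^ 2 = 1 := by
      rw [pow_two]; nth_rewrite 1 [← he]; exact inv_mul_cancel g
    have := orderOf_dvd_of_pow_eq_one this
    rw [hord] at this; omega
  have hg2inv : (g ^ 2)⁻¹ ≠ g ^ 2 := by
    intro he
    have : (g ^ 2) ^ 2 = 1 := by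
      rw [pow_two]; nth_rewrite 1 [← he]; exact inv_mul_cancel (g ^ 2)
    have := orderOf_dvd_of_pow_eq_one this
    rw [hord2] at this; omega
  have hcardsum : Fintype.card G =
      ∑ b : B, (Finset.univ.filter (fun a => f a = b)).card := by
    exact Finset.card_eq_sum_card_fiberwise (fun x _ => Finset.mem_univ _)
  have hterm : ∀ b : B,
      (1 + (if b = b1 then 1 else 0) + (if b = b2 then 1 else 0)) ≤
      (Finset.univ.filter (fun a => f a = b)).card := by
    intro b
    by_cases h1 : b = b1
    · subst h1
      rw [if_pos rfl, if_neg hb12]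
      have hsub : ({g, g⁻¹} : Finset G) ⊆ Finset.univ.filter (fun a => f a = b1) := by
        intro a ha
        simp only [Finset.mem_insert, Finset.mem_singleton] at ha
        rcases ha with rfl | rfl
        · simp [b1]
        · simp only [Finset.mem_filter, Finset.mem_univ, true_and]
          exact Subtype.ext (Subgroup.zpowers_inv)
      have := Finset.card_le_card hsub
      rw [Finset.card_insert_of_notMem (by simpa using Ne.symm hginv),
        Finset.card_singleton] at this
      omega
    · by_cases h2 : b = b2
      · subst h2
        rw [if_neg h1, if_pos rfl]
        have hsub : ({g ^ 2, (g ^ 2)⁻¹} : Finset G) ⊆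
            Finset.univ.filter (fun a => f a = b2) := by
          intro a ha
          simp only [Finset.mem_insert, Finset.mem_singleton] at ha
          rcases ha with rfl | rfl
          · simp [b2]
          · simp only [Finset.mem_filter, Finset.mem_univ, true_and]
            exact Subtype.ext (Subgroup.zpowers_inv)
        have := Finset.card_le_card hsub
        rw [Finset.card_insert_of_notMem (by simpa using Ne.symm hg2inv),
          Finset.card_singleton] at this
        omega
      · simp only [if_neg h1, if_neg h2]
        obtain ⟨a, ha⟩ := hfsurj b
        have : a ∈ Finset.univ.filter (fun a => f a = b) := by simp [ha]
        have := Finset.card_pos.mpr ⟨a, this⟩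
        omega
  have hsumge : Fintype.card B + 2 ≤ Fintype.card G := by
    rw [hcardsum]
    calc Fintype.card B + 2
        = ∑ b : B, (1 + (if b = b1 then 1 else 0) + (if b = b2 then 1 else 0)) := by
          rw [Finset.sum_add_distrib, Finset.sum_add_distrib, Finset.sum_const,
            Finset.sum_ite_eq' Finset.univ b1 (fun _ => 1),
            Finset.sum_ite_eq' Finset.univ b2 (fun _ => 1)]
          simp [Finset.card_univ]
      _ ≤ _ := Finset.sum_le_sum (fun b _ => hterm b)
  have hG1 : 1 ≤ Fintype.card G := Fintype.card_pos
  rw [Nat.card_eq_fintype_card, Nat.card_eq_fintype_card] at h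
  rw [h] at hsumge
  omega
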